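/- Let A ∈ ℂ^{m×n} with SVD A = UΣV*, target rank r, d = r+p, and R ∈ ℝ^{d×n}. With Σ₂, R₁ = V₁*R^T, R₂ = V₂*R^T as in the deterministic range-finder setup, suppose ‖R‖ ≤ √(n(1+ε)) and σ_min(R V₁)² ≥ (1−ε) with ε ∈ (0,1). Then for Y = AR^T, ‖(I − P_Y)A‖ ≤ σ_{r+1}(A) · √(1 + n(1+ε)/(1−ε)). -/

import Mathlib

open Matrix

/-- Euclidean norm of a real vector. -/
noncomputable def vnormR {α : Type*} [Fintype α] (x : α → ℝ) : ℝ := Real.sqrt (∑ i, x i ^ 2)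

/-- Euclidean norm of a complex vector. -/
noncomputable def vnormC {α : Type*} [Fintype α] (x : α → ℂ) : ℝ :=
  Real.sqrt (∑ i, ‖x i‖ ^ 2)

/-- Spectral norm of a real matrix. -/
noncomputable def specNorm {α β : Type*} [Fintype α] [Fintype β]
    (A : Matrix α β ℝ) : ℝ :=
  sSup {c : ℝ | ∃ x : β → ℝ, vnormR x = 1 ∧ c = vnormR (A.mulVec x)}

/-- Spectral norm of a complex matrix. -/
noncomputable def specNormC {α β : Type*} [Fintype α] [Fintype β]
    (A : Matrix α β ℂ) : ℝ :=
  sSup {c : ℝ | ∃ x : β → ℂ, vnormC x = 1 ∧ c = vnormC (A.mulVec x)}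

/-- Smallest singular value of a complex matrix: `σ_min(B) = min_{‖x‖=1} ‖Bx‖`. -/
noncomputable def sigmaMinC {α β : Type*} [Fintype α] [Fintype β]
    (B : Matrix α β ℂ) : ℝ :=
  sInf {c : ℝ | ∃ x : β → ℂ, vnormC x = 1 ∧ c = vnormC (B.mulVec x)}

/-!
Write `V = [V₁ V₂]`, `Ω = Rᵀ` and `F = V₂ᴴ Ω G`, where `G = R V₁ (V₁ᴴ Rᵀ R V₁)⁻¹` is a right
inverse of `V₁ᴴ Ω = (R V₁)ᴴ` with `‖G‖ ≤ 1 / σ_min(R V₁)`. Since `V₁ V₁ᴴ + V₂ V₂ᴴ = 1`,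
`1 - Ω G V₁ᴴ = V₂ (V₂ᴴ - F V₁ᴴ)`, and `(1 - P) A Ω = 0` because `P` fixes the range of `Y = A Ω`.
Hence `(1 - P) A = (1 - P) (A V₂) (V₂ᴴ - F V₁ᴴ)`, where `‖1 - P‖ ≤ 1`, `‖A V₂‖ ≤ ‖Σ₂‖`, and
`V₂ᴴ - F V₁ᴴ = [-F 1] Vᴴ` has norm at most `√(1 + ‖F‖²)` with `‖F‖ ≤ ‖R‖ / σ_min(R V₁)`.
-/

open scoped Matrix.Norms.L2Operator
open WithLp

namespace Matrix

variable {𝕜 : Type*} [RCLike 𝕜] {l m n : Type*} [Fintype l] [Fintype m] [Fintype n]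

theorem sSup_norm_mulVec_eq_l2_opNorm [DecidableEq n] (A : Matrix m n 𝕜) :
    sSup {c : ℝ | ∃ x : n → 𝕜, ‖toLp 2 x‖ = 1 ∧ c = ‖toLp 2 (A *ᵥ x)‖} = ‖A‖ := by
  rw [l2_opNorm_def, ← ContinuousLinearMap.sSup_sphere_eq_norm]
  congr 1
  ext c
  constructor
  · rintro ⟨x, hx, rfl⟩
    exact ⟨toLp 2 x, by simpa using hx, rfl⟩
  · rintro ⟨x, hx, rfl⟩
    exact ⟨ofLp x, by simpa using hx, rfl⟩

theorem l2_opNorm_le_bound [DecidableEq n] (A : Matrix m n 𝕜) {c : ℝ} (hc : 0 ≤ c)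
    (h : ∀ x : n → 𝕜, ‖toLp 2 (A *ᵥ x)‖ ≤ c * ‖toLp 2 x‖) : ‖A‖ ≤ c := by
  rw [l2_opNorm_def]
  exact ContinuousLinearMap.opNorm_le_bound _ hc fun x => h (ofLp x)

theorem norm_toLp_mulVec_le [DecidableEq n] (A : Matrix m n 𝕜) (x : n → 𝕜) :
    ‖toLp 2 (A *ᵥ x)‖ ≤ ‖A‖ * ‖toLp 2 x‖ :=
  A.l2_opNorm_mulVec (toLp 2 x)

theorem l2_opNorm_le_one_of_isHermitian_of_mul_self [DecidableEq n] {P : Matrix n n 𝕜}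
    (hP : P.IsHermitian) (hPP : P * P = P) : ‖P‖ ≤ 1 := by
  have h := P.l2_opNorm_conjTranspose_mul_self
  rw [hP.eq, hPP] at h
  nlinarith [norm_nonneg P]

theorem l2_opNorm_le_one_of_conjTranspose_mul_self_eq_one [DecidableEq n] {W : Matrix m n 𝕜}
    (hW : Wᴴ * W = 1) : ‖W‖ ≤ 1 := by
  have h := W.l2_opNorm_conjTranspose_mul_self
  have h1 : ‖(1 : Matrix n n 𝕜)‖ ≤ 1 :=
    l2_opNorm_le_one_of_isHermitian_of_mul_self isHermitian_one (mul_one 1)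
  rw [hW] at h
  nlinarith [norm_nonneg W]

theorem l2_opNorm_fromCols_le [DecidableEq m] [DecidableEq n] (F₁ : Matrix l m 𝕜)
    (F₂ : Matrix l n 𝕜) : ‖fromCols F₁ F₂‖ ≤ √(‖F₁‖ ^ 2 + ‖F₂‖ ^ 2) := by
  refine l2_opNorm_le_bound _ (Real.sqrt_nonneg _) fun x => ?_
  set x₁ : m → 𝕜 := fun i => x (Sum.inl i)
  set x₂ : n → 𝕜 := fun i => x (Sum.inr i)
  have hx : ‖toLp 2 x‖ = √(‖toLp 2 x₁‖ ^ 2 + ‖toLp 2 x₂‖ ^ 2) := by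
    simp only [EuclideanSpace.norm_eq, Fintype.sum_sum_type, x₁, x₂]
    rw [Real.sq_sqrt (by positivity), Real.sq_sqrt (by positivity)]
  have hsplit : fromCols F₁ F₂ *ᵥ x = F₁ *ᵥ x₁ + F₂ *ᵥ x₂ := fromCols_mulVec F₁ F₂ x
  have hCS : ‖F₁‖ * ‖toLp 2 x₁‖ + ‖F₂‖ * ‖toLp 2 x₂‖ ≤
      √(‖F₁‖ ^ 2 + ‖F₂‖ ^ 2) * √(‖toLp 2 x₁‖ ^ 2 + ‖toLp 2 x₂‖ ^ 2) := by
    rw [← Real.sqrt_mul (by positivity)]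
    apply Real.le_sqrt_of_sq_le
    nlinarith [sq_nonneg (‖F₁‖ * ‖toLp 2 x₂‖ - ‖F₂‖ * ‖toLp 2 x₁‖)]
  calc ‖toLp 2 (fromCols F₁ F₂ *ᵥ x)‖
      ≤ ‖toLp 2 (F₁ *ᵥ x₁)‖ + ‖toLp 2 (F₂ *ᵥ x₂)‖ := by
        rw [hsplit, WithLp.toLp_add]; exact norm_add_le _ _
    _ ≤ ‖F₁‖ * ‖toLp 2 x₁‖ + ‖F₂‖ * ‖toLp 2 x₂‖ :=
        add_le_add (norm_toLp_mulVec_le _ _) (norm_toLp_mulVec_le _ _)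
    _ ≤ _ := by rw [hx]; exact hCS

theorem norm_sq_toLp_eq_re_add_im (y : n → ℂ) :
    ‖toLp 2 y‖ ^ 2 = ‖toLp 2 (fun j => (y j).re)‖ ^ 2 + ‖toLp 2 (fun j => (y j).im)‖ ^ 2 := by
  simp only [EuclideanSpace.norm_sq_eq, ← Finset.sum_add_distrib, Complex.sq_norm,
    Complex.normSq_apply, Real.norm_eq_abs, sq_abs]
  exact Finset.sum_congr rfl fun j _ => by ring

theorem conjTranspose_map_ofReal {α β : Type*} (R : Matrix α β ℝ) :
    (R.map ((↑) : ℝ → ℂ))ᴴ = Rᵀ.map (↑) := by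
  ext i j
  simp

theorem l2_opNorm_map_ofReal_le [DecidableEq n] (R : Matrix m n ℝ) :
    ‖R.map ((↑) : ℝ → ℂ)‖ ≤ ‖R‖ := by
  refine l2_opNorm_le_bound _ (norm_nonneg R) fun x => ?_
  have hre : (fun i => ((R.map ((↑) : ℝ → ℂ) *ᵥ x) i).re) = R *ᵥ fun j => (x j).re := by
    funext i; simp [mulVec, dotProduct, Complex.re_sum]
  have him : (fun i => ((R.map ((↑) : ℝ → ℂ) *ᵥ x) i).im) = R *ᵥ fun j => (x j).im := by
    funext i; simp [mulVec, dotProduct, Complex.im_sum]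
  have h₁ := norm_toLp_mulVec_le R fun j => (x j).re
  have h₂ := norm_toLp_mulVec_le R fun j => (x j).im
  refine pow_le_pow_iff_left₀ (norm_nonneg _) (by positivity) two_ne_zero |>.mp ?_
  rw [mul_pow, norm_sq_toLp_eq_re_add_im, norm_sq_toLp_eq_re_add_im x, hre, him]
  nlinarith [norm_nonneg (toLp 2 (R *ᵥ fun j => (x j).re)),
    norm_nonneg (toLp 2 (R *ᵥ fun j => (x j).im))]

theorem inner_toLp_conjTranspose_mulVec (B : Matrix m n 𝕜) (v : m → 𝕜) (w : n → 𝕜) :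
    inner 𝕜 (toLp 2 w) (toLp 2 (Bᴴ *ᵥ v)) = inner 𝕜 (toLp 2 (B *ᵥ w)) (toLp 2 v) := by
  simp only [EuclideanSpace.inner_toLp_toLp]
  rw [dotProduct_comm, star_mulVec, dotProduct_comm v, ← dotProduct_mulVec]

theorem norm_sq_toLp_mulVec_le (B : Matrix m n 𝕜) (w : n → 𝕜) :
    ‖toLp 2 (B *ᵥ w)‖ ^ 2 ≤ ‖toLp 2 w‖ * ‖toLp 2 ((Bᴴ * B) *ᵥ w)‖ := by
  rw [← mulVec_mulVec, ← inner_self_eq_norm_sq (𝕜 := 𝕜),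
    ← inner_toLp_conjTranspose_mulVec]
  exact re_inner_le_norm _ _

theorem exists_conjTranspose_mul_eq_one_of_le_norm_mulVec [DecidableEq n] (B : Matrix m n 𝕜)
    {σ : ℝ} (hσ : 0 < σ) (hB : ∀ x, σ * ‖toLp 2 x‖ ≤ ‖toLp 2 (B *ᵥ x)‖) :
    ∃ G : Matrix m n 𝕜, Bᴴ * G = 1 ∧ ‖G‖ ≤ σ⁻¹ := by
  have hM : IsUnit (Bᴴ * B) := by
    refine mulVec_injective_iff_isUnit.mp fun x y hxy => sub_eq_zero.mp ?_
    have hker : (Bᴴ * B) *ᵥ (x - y) = 0 := by rw [mulVec_sub, hxy, sub_self]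
    have h₁ := hB (x - y)
    have h₂ := norm_sq_toLp_mulVec_le B (x - y)
    rw [hker, WithLp.toLp_zero, norm_zero, mul_zero] at h₂
    have : σ * ‖toLp 2 (x - y)‖ ≤ 0 := by nlinarith [norm_nonneg (toLp 2 (B *ᵥ (x - y)))]
    have h₀ : ‖toLp 2 (x - y)‖ = 0 :=
      le_antisymm (nonpos_of_mul_nonpos_right this hσ) (norm_nonneg _)
    simpa [sub_eq_zero] using h₀
  have hMM : Bᴴ * B * (Bᴴ * B)⁻¹ = 1 := mul_nonsing_inv _ ((isUnit_iff_isUnit_det _).mp hM)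
  refine ⟨B * (Bᴴ * B)⁻¹, by rw [← Matrix.mul_assoc, hMM], ?_⟩
  refine l2_opNorm_le_bound _ (inv_nonneg.mpr hσ.le) fun x => ?_
  -- with `w = (Bᴴ B)⁻¹ x`: `σ² ‖w‖² ≤ ‖B w‖² = re ⟪w, x⟫ ≤ ‖w‖ ‖x‖`
  set w := (Bᴴ * B)⁻¹ *ᵥ x
  have hw : (Bᴴ * B) *ᵥ w = x := by rw [mulVec_mulVec, hMM, one_mulVec]
  have h₁ := hB w
  have h₂ := norm_sq_toLp_mulVec_le B w
  rw [hw] at h₂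
  rw [← mulVec_mulVec, inv_mul_eq_div, le_div_iff₀ hσ]
  rcases (norm_nonneg (toLp 2 (B *ᵥ w))).eq_or_lt with h₀ | h₀
  · rw [← h₀, zero_mul]; exact norm_nonneg _
  · nlinarith [norm_nonneg (toLp 2 w), norm_nonneg (toLp 2 x)]

theorem mul_eq_self_of_range_le [DecidableEq l] {R : Type*} [CommSemiring R]
    {P : Matrix m m R} {Y : Matrix m l R} (hPP : P * P = P)
    (h : LinearMap.range Y.mulVecLin ≤ LinearMap.range P.mulVecLin) : P * Y = Y := by
  refine toLin'.injective (LinearMap.ext fun v => ?_)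
  obtain ⟨u, hu⟩ := h ⟨v, rfl⟩
  simp only [mulVecLin_apply] at hu
  rw [toLin'_apply, toLin'_apply, ← mulVec_mulVec, ← hu, mulVec_mulVec, hPP]

variable {ι κ : Type*}

theorem conjTranspose_toCols₂_mul_toCols₂ [DecidableEq ι] [DecidableEq κ]
    {U : Matrix m (ι ⊕ κ) 𝕜} (hU : Uᴴ * U = 1) : U.toCols₂ᴴ * U.toCols₂ = 1 := by
  ext i j
  simpa [mul_apply, one_apply] using congrFun (congrFun hU (Sum.inr i)) (Sum.inr j)

theorem l2_opNorm_toCols₂_conjTranspose_sub_le [Fintype ι] [Fintype κ] [DecidableEq ι]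
    [DecidableEq κ] {V : Matrix (ι ⊕ κ) (ι ⊕ κ) 𝕜} (hV : Vᴴ * V = 1) (F : Matrix κ ι 𝕜) :
    ‖V.toCols₂ᴴ - F * V.toCols₁ᴴ‖ ≤ √(‖F‖ ^ 2 + 1) := by
  have hfac : V.toCols₂ᴴ - F * V.toCols₁ᴴ = fromCols (-F) (1 : Matrix κ κ 𝕜) * Vᴴ := by
    conv_rhs => rw [← fromCols_toCols V, conjTranspose_fromCols_eq_fromRows_conjTranspose,
      fromCols_mul_fromRows]
    rw [Matrix.neg_mul, Matrix.one_mul, neg_add_eq_sub]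
  have hVH : ‖Vᴴ‖ ≤ 1 := l2_opNorm_le_one_of_conjTranspose_mul_self_eq_one
    (by rw [conjTranspose_conjTranspose]; exact mul_eq_one_comm.mp hV)
  have h1 : ‖(1 : Matrix κ κ 𝕜)‖ ≤ 1 :=
    l2_opNorm_le_one_of_isHermitian_of_mul_self isHermitian_one (mul_one 1)
  calc ‖V.toCols₂ᴴ - F * V.toCols₁ᴴ‖ ≤ ‖fromCols (-F) (1 : Matrix κ κ 𝕜)‖ * ‖Vᴴ‖ := by
        rw [hfac]; exact l2_opNorm_mul _ _
    _ ≤ √(‖F‖ ^ 2 + ‖(1 : Matrix κ κ 𝕜)‖ ^ 2) * 1 := by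
        rw [← norm_neg F]
        exact mul_le_mul (l2_opNorm_fromCols_le _ _) hVH (norm_nonneg _) (Real.sqrt_nonneg _)
    _ ≤ √(‖F‖ ^ 2 + 1) := by
        rw [mul_one]
        gcongr
        nlinarith [norm_nonneg (1 : Matrix κ κ 𝕜)]

theorem one_sub_mul_conjTranspose_toCols₁_eq [Fintype ι] [Fintype κ] [DecidableEq ι]
    [DecidableEq κ] {δ : Type*} [Fintype δ] {V : Matrix (ι ⊕ κ) (ι ⊕ κ) 𝕜} (hV : Vᴴ * V = 1)
    {Ω : Matrix (ι ⊕ κ) δ 𝕜} {G : Matrix δ ι 𝕜} (hG : V.toCols₁ᴴ * Ω * G = 1) :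
    1 - Ω * G * V.toCols₁ᴴ = V.toCols₂ * (V.toCols₂ᴴ - (V.toCols₂ᴴ * Ω * G) * V.toCols₁ᴴ) := by
  have hVV : V.toCols₁ * V.toCols₁ᴴ + V.toCols₂ * V.toCols₂ᴴ = 1 := by
    rw [← fromCols_mul_fromRows, ← conjTranspose_fromCols_eq_fromRows_conjTranspose,
      fromCols_toCols]
    exact mul_eq_one_comm.mp hV
  calc 1 - Ω * G * V.toCols₁ᴴ
      = (V.toCols₁ * V.toCols₁ᴴ + V.toCols₂ * V.toCols₂ᴴ)
        - (V.toCols₁ * V.toCols₁ᴴ + V.toCols₂ * V.toCols₂ᴴ) * Ω * G * V.toCols₁ᴴ := by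
        rw [hVV, Matrix.one_mul]
    _ = V.toCols₁ * V.toCols₁ᴴ - V.toCols₁ * (V.toCols₁ᴴ * Ω * G) * V.toCols₁ᴴ
        + V.toCols₂ * (V.toCols₂ᴴ - (V.toCols₂ᴴ * Ω * G) * V.toCols₁ᴴ) := by
        simp only [Matrix.add_mul, Matrix.mul_sub, Matrix.mul_assoc]
        abel
    _ = _ := by rw [hG, Matrix.mul_one, sub_self, zero_add]

theorem l2_opNorm_one_sub_mul_le [Fintype ι] [Fintype κ] [DecidableEq ι] [DecidableEq κ]
    [DecidableEq m] {δ : Type*} [Fintype δ] [DecidableEq δ] (A : Matrix m (ι ⊕ κ) 𝕜)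
    {V : Matrix (ι ⊕ κ) (ι ⊕ κ) 𝕜} (hV : Vᴴ * V = 1)
    {Ω : Matrix (ι ⊕ κ) δ 𝕜} {G : Matrix δ ι 𝕜} (hG : V.toCols₁ᴴ * Ω * G = 1)
    {P : Matrix m m 𝕜} (hP : P.IsHermitian) (hPP : P * P = P) (hPY : P * (A * Ω) = A * Ω) :
    ‖(1 - P) * A‖ ≤ ‖A * V.toCols₂‖ * √((‖Ω‖ * ‖G‖) ^ 2 + 1) := by
  set F := V.toCols₂ᴴ * Ω * G
  have hQ : (1 - P) * (A * Ω) = 0 := by rw [Matrix.sub_mul, Matrix.one_mul, hPY, sub_self]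
  have hfac : (1 - P) * A = (1 - P) * (A * V.toCols₂) * (V.toCols₂ᴴ - F * V.toCols₁ᴴ) := by
    calc (1 - P) * A = (1 - P) * A * (1 - Ω * G * V.toCols₁ᴴ) := by
          rw [Matrix.mul_sub, Matrix.mul_one, ← Matrix.mul_assoc, ← Matrix.mul_assoc,
            Matrix.mul_assoc (1 - P), hQ, Matrix.zero_mul, Matrix.zero_mul, sub_zero]
      _ = _ := by rw [one_sub_mul_conjTranspose_toCols₁_eq hV hG]; simp only [F, Matrix.mul_assoc]
  have hQn : ‖1 - P‖ ≤ 1 := l2_opNorm_le_one_of_isHermitian_of_mul_self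
    (isHermitian_one.sub hP) (by simp only [Matrix.sub_mul, Matrix.mul_sub, Matrix.one_mul,
      Matrix.mul_one, hPP, sub_self, sub_zero])
  have hF : ‖F‖ ≤ ‖Ω‖ * ‖G‖ := by
    have hV₂ : ‖V.toCols₂ᴴ‖ ≤ 1 := by
      rw [l2_opNorm_conjTranspose]
      exact l2_opNorm_le_one_of_conjTranspose_mul_self_eq_one
        (conjTranspose_toCols₂_mul_toCols₂ hV)
    calc ‖F‖ ≤ ‖V.toCols₂ᴴ‖ * ‖Ω‖ * ‖G‖ :=
          (l2_opNorm_mul _ _).trans (by gcongr; exact l2_opNorm_mul _ _)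
      _ ≤ ‖Ω‖ * ‖G‖ := by rw [mul_assoc]; exact mul_le_of_le_one_left (by positivity) hV₂
  calc ‖(1 - P) * A‖ ≤ ‖1 - P‖ * ‖A * V.toCols₂‖ * ‖V.toCols₂ᴴ - F * V.toCols₁ᴴ‖ := by
        rw [hfac]
        exact (l2_opNorm_mul _ _).trans (by gcongr; exact l2_opNorm_mul _ _)
    _ ≤ 1 * ‖A * V.toCols₂‖ * √(‖F‖ ^ 2 + 1) := by
        gcongr
        exact l2_opNorm_toCols₂_conjTranspose_sub_le hV _
    _ ≤ ‖A * V.toCols₂‖ * √((‖Ω‖ * ‖G‖) ^ 2 + 1) := by rw [one_mul]; gcongr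

theorem l2_opNorm_mul_diagonal_mul_conjTranspose_mul_toCols₂_le [Fintype ι] [Fintype κ]
    [DecidableEq ι] [DecidableEq κ] {U : Matrix m (ι ⊕ κ) 𝕜} (hU : Uᴴ * U = 1) (d : ι ⊕ κ → 𝕜)
    {V : Matrix (ι ⊕ κ) (ι ⊕ κ) 𝕜} (hV : Vᴴ * V = 1) :
    ‖U * diagonal d * Vᴴ * V.toCols₂‖ ≤ ‖diagonal (fun i => d (Sum.inr i))‖ := by
  have hV₂ : Vᴴ * V.toCols₂ = (1 : Matrix (ι ⊕ κ) (ι ⊕ κ) 𝕜).toCols₂ := by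
    rw [← hV]; ext i j; simp [mul_apply]
  have hfac : U * diagonal d * Vᴴ * V.toCols₂ = U.toCols₂ * diagonal (fun i => d (Sum.inr i)) := by
    rw [Matrix.mul_assoc, hV₂]
    ext i j
    simp [mul_apply, diagonal_apply, one_apply]
  rw [hfac]
  exact (l2_opNorm_mul _ _).trans (mul_le_of_le_one_left (norm_nonneg _)
    (l2_opNorm_le_one_of_conjTranspose_mul_self_eq_one (conjTranspose_toCols₂_mul_toCols₂ hU)))

end Matrix

theorem vnormC_eq_norm {α : Type*} [Fintype α] (x : α → ℂ) : vnormC x = ‖toLp 2 x‖ := by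
  rw [EuclideanSpace.norm_eq]; rfl

theorem vnormR_eq_norm {α : Type*} [Fintype α] (x : α → ℝ) : vnormR x = ‖toLp 2 x‖ := by
  simp [EuclideanSpace.norm_eq, vnormR]

theorem specNormC_eq_l2_opNorm {α β : Type*} [Fintype α] [Fintype β] [DecidableEq β]
    (A : Matrix α β ℂ) : specNormC A = ‖A‖ := by
  simp only [specNormC, vnormC_eq_norm]
  exact A.sSup_norm_mulVec_eq_l2_opNorm

theorem specNorm_eq_l2_opNorm {α β : Type*} [Fintype α] [Fintype β] [DecidableEq β]
    (A : Matrix α β ℝ) : specNorm A = ‖A‖ := by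
  simp only [specNorm, vnormR_eq_norm]
  exact A.sSup_norm_mulVec_eq_l2_opNorm

theorem sigmaMinC_nonneg {α β : Type*} [Fintype α] [Fintype β] (B : Matrix α β ℂ) :
    0 ≤ sigmaMinC B :=
  Real.sInf_nonneg fun _ ⟨_, _, hc⟩ => hc ▸ Real.sqrt_nonneg _

theorem sigmaMinC_mul_norm_le {α β : Type*} [Fintype α] [Fintype β] (B : Matrix α β ℂ)
    (x : β → ℂ) : sigmaMinC B * ‖toLp 2 x‖ ≤ ‖toLp 2 (B *ᵥ x)‖ := by
  rcases eq_or_ne x 0 with rfl | hx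
  · simp
  have hx' : ‖toLp 2 x‖ ≠ 0 := by simpa using hx
  set u := ((‖toLp 2 x‖ : ℂ)⁻¹) • x
  have hu : ‖toLp 2 u‖ = 1 := by simp [u, norm_smul, hx']
  have hle : sigmaMinC B ≤ ‖toLp 2 (B *ᵥ u)‖ :=
    csInf_le ⟨0, fun _ ⟨_, _, hc⟩ => hc ▸ Real.sqrt_nonneg _⟩
      ⟨u, by rw [vnormC_eq_norm, hu], by rw [vnormC_eq_norm]⟩
  rw [mulVec_smul] at hle
  simp [norm_smul] at hle
  rwa [← le_div_iff₀ (by positivity), div_eq_inv_mul]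

/-- Here `n = r + k` and `d = r + p`; the columns of `A` are indexed by `Fin r ⊕ Fin k`. -/
theorem stmt4_general {m r k p : ℕ}
    (A U : Matrix (Fin m) (Fin r ⊕ Fin k) ℂ)
    (V : Matrix (Fin r ⊕ Fin k) (Fin r ⊕ Fin k) ℂ)
    (s : Fin r ⊕ Fin k → ℝ)
    (hU : Uᴴ * U = 1) (hV : Vᴴ * V = 1)
    (hA : A = U * Matrix.diagonal (fun i => (s i : ℂ)) * Vᴴ)
    (R : Matrix (Fin (r + p)) (Fin r ⊕ Fin k) ℝ)
    (ε : ℝ) (hε : ε ∈ Set.Ioo (0:ℝ) 1)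
    -- ‖R‖ ≤ √(n(1+ε)):
    (hRnorm : specNorm R ≤ Real.sqrt ((r + k) * (1 + ε)))
    -- σ_min(R V₁)² ≥ 1 − ε:
    (hsmin : 1 - ε ≤
      sigmaMinC ((R.map (fun a => (a : ℂ))) * V.submatrix id Sum.inl) ^ 2)
    -- the sketch `Y = A Rᵀ` and the orthogonal projector onto its column space:
    (Y : Matrix (Fin m) (Fin (r + p)) ℂ)
    (hY : Y = A * (Rᵀ.map (fun a => (a : ℂ))))
    (P : Matrix (Fin m) (Fin m) ℂ)
    (hP1 : P.IsHermitian) (hP2 : P * P = P)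
    (hP3 : LinearMap.range P.mulVecLin = LinearMap.range Y.mulVecLin) :
    specNormC ((1 - P) * A) ≤
      specNormC (Matrix.diagonal (fun i : Fin k => (s (Sum.inr i) : ℂ))) *
        Real.sqrt (1 + (r + k) * (1 + ε) / (1 - ε)) := by
  obtain ⟨hε₀, hε₁⟩ := hε
  set Ω := Rᵀ.map (fun a => (a : ℂ))
  set B := R.map (fun a => (a : ℂ)) * V.toCols₁
  have hBH : Bᴴ = V.toCols₁ᴴ * Ω := by rw [conjTranspose_mul, conjTranspose_map_ofReal]
  have hσ : 0 < √(1 - ε) := Real.sqrt_pos.mpr (by linarith)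
  obtain ⟨G, hG, hGn⟩ := B.exists_conjTranspose_mul_eq_one_of_le_norm_mulVec hσ fun x =>
    le_trans (by gcongr; exact (Real.sqrt_le_left (sigmaMinC_nonneg B)).mpr hsmin)
      (sigmaMinC_mul_norm_le B x)
  have hΩ : ‖Ω‖ ≤ √((r + k) * (1 + ε)) := by
    rw [show Ω = _ from (conjTranspose_map_ofReal R).symm, l2_opNorm_conjTranspose]
    exact (l2_opNorm_map_ofReal_le R).trans (specNorm_eq_l2_opNorm R ▸ hRnorm)
  have hΩG : (‖Ω‖ * ‖G‖) ^ 2 ≤ (r + k) * (1 + ε) / (1 - ε) := calc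
    _ ≤ (√((r + k) * (1 + ε)) * (√(1 - ε))⁻¹) ^ 2 := by gcongr
    _ = (r + k) * (1 + ε) / (1 - ε) := by
        rw [mul_pow, inv_pow, Real.sq_sqrt (by positivity), Real.sq_sqrt (by linarith),
          div_eq_mul_inv]
  have hPY : P * Y = Y := mul_eq_self_of_range_le hP2 hP3.ge
  rw [specNormC_eq_l2_opNorm, specNormC_eq_l2_opNorm]
  calc ‖(1 - P) * A‖ ≤ ‖A * V.toCols₂‖ * √((‖Ω‖ * ‖G‖) ^ 2 + 1) :=
        l2_opNorm_one_sub_mul_le A hV (by rw [← hBH, hG]) hP1 hP2 (hY ▸ hPY)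
    _ ≤ _ := by
        rw [add_comm 1, hA]
        gcongr
        exact l2_opNorm_mul_diagonal_mul_conjTranspose_mul_toCols₂_le hU _ hV

/-- Range-finder bound under JL-type events.  The matrix `A` has `n = r + k`
columns, indexed by `Fin r ⊕ Fin k`, and `d = r + p`.  The quantity
`specNormC Σ₂` is the `(r+1)`-st singular value `σ_{r+1}(A)`. -/
theorem stmt4 {m r k p : ℕ}
    (A U : Matrix (Fin m) (Fin r ⊕ Fin k) ℂ)
    (V : Matrix (Fin r ⊕ Fin k) (Fin r ⊕ Fin k) ℂ)
    (s : Fin r ⊕ Fin k → ℝ)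
    (hU : Uᴴ * U = 1) (hV : Vᴴ * V = 1)
    (hs0 : ∀ i, 0 ≤ s i)
    (hsmono : ∀ i j : Fin (r + k), i ≤ j →
      s (finSumFinEquiv.symm j) ≤ s (finSumFinEquiv.symm i))
    (hA : A = U * Matrix.diagonal (fun i => (s i : ℂ)) * Vᴴ)
    (R : Matrix (Fin (r + p)) (Fin r ⊕ Fin k) ℝ)
    (ε : ℝ) (hε : ε ∈ Set.Ioo (0:ℝ) 1)
    -- ‖R‖ ≤ √(n(1+ε)):
    (hRnorm : specNorm R ≤ Real.sqrt ((r + k) * (1 + ε)))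
    -- σ_min(R V₁)² ≥ 1 − ε:
    (hsmin : 1 - ε ≤
      sigmaMinC ((R.map (fun a => (a : ℂ))) * V.submatrix id Sum.inl) ^ 2)
    -- the sketch `Y = A Rᵀ` and the orthogonal projector onto its column space:
    (Y : Matrix (Fin m) (Fin (r + p)) ℂ)
    (hY : Y = A * (Rᵀ.map (fun a => (a : ℂ))))
    (P : Matrix (Fin m) (Fin m) ℂ)
    (hP1 : P.IsHermitian) (hP2 : P * P = P)
    (hP3 : LinearMap.range P.mulVecLin = LinearMap.range Y.mulVecLin) :
    specNormC ((1 - P) * A) ≤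
      specNormC (Matrix.diagonal (fun i : Fin k => (s (Sum.inr i) : ℂ))) *
        Real.sqrt (1 + (r + k) * (1 + ε) / (1 - ε)) :=
  stmt4_general A U V s hU hV hA R ε hε hRnorm hsmin Y hY P hP1 hP2 hP3
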